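/- Let A be a proper pervasive uniform algebra on a compact Hausdorff space X. Then X is a perfect set: X has no isolated points. -/

import Mathlib

variable {X : Type} [TopologicalSpace X] [CompactSpace X] [T2Space X]

/-- A uniform algebra `A` on `X` is pervasive if for every nonempty proper closed subset
`F` of `X`, the restrictions of elements of `A` to `F` are dense in `C(F, ℂ)`. -/
def Pervasive (A : Subalgebra ℂ C(X, ℂ)) : Prop :=
  ∀ F : Set X, IsClosed F → F.Nonempty → F ≠ Set.univ →
    Dense ((fun f : C(X, ℂ) => f.restrict F) '' (A : Set C(X, ℂ)))

/-! If `x` is isolated, `F = X \ {x}` is closed and `A|F` is dense in `C(F)`. Either some `f ∈ A`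
peaks at `x` (`f x = 1 > ‖f|F‖`): then `fⁿ` converges to the indicator of `{x}`, which together
with the density of `A|F` gives `A = C(X)`. Or no `f` does: then `|f x| ≤ ‖f|F‖` on `A`, so
restriction is an isometric isomorphism `A ≃ C(F)`, evaluation at `x` becomes a character of
`C(F)`, hence evaluation at some `z ∈ F`, and `A` does not separate `x` from `z`. -/

open Set Filter Topology WeakDual.CharacterSpace

namespace ContinuousMap

variable {𝕜 Y : Type*} [RCLike 𝕜] [TopologicalSpace Y]

theorem norm_restrict_le {E : Type*} [SeminormedAddCommGroup E] [CompactSpace Y] (f : C(Y, E))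
    (s : Set Y) [CompactSpace s] : ‖f.restrict s‖ ≤ ‖f‖ :=
  (norm_le _ (norm_nonneg _)).2 fun z => f.norm_coe_le_norm z

theorem norm_le_max_norm_apply_norm_restrict_compl {E : Type*} [SeminormedAddCommGroup E]
    [CompactSpace Y] (f : C(Y, E)) (x : Y) [CompactSpace ({x}ᶜ : Set Y)] :
    ‖f‖ ≤ max ‖f x‖ ‖f.restrict {x}ᶜ‖ := by
  refine (norm_le _ (le_max_of_le_left (norm_nonneg _))).2 fun z => ?_
  rcases eq_or_ne z x with rfl | hz
  · exact le_max_left _ _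
  · exact le_max_of_le_right ((f.restrict {x}ᶜ).norm_coe_le_norm ⟨z, hz⟩)

variable (𝕜) in
def restrictₐ (s : Set Y) : C(Y, 𝕜) →ₐ[𝕜] C(s, 𝕜) :=
  (compStarAlgHom' 𝕜 𝕜 ((ContinuousMap.id Y).restrict s)).toAlgHom

@[simp]
theorem restrictₐ_apply (s : Set Y) (f : C(Y, 𝕜)) : restrictₐ 𝕜 s f = f.restrict s :=
  rfl

theorem restrictₐ_charFn_compl {x : Y} (hx : IsClopen {x}) :
    restrictₐ 𝕜 {x}ᶜ (LocallyConstant.charFn 𝕜 hx) = 0 := by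
  ext ⟨z, hz⟩
  simpa [LocallyConstant.coe_charFn] using hz

end ContinuousMap

theorem AlgHom.exists_eq_eval {𝕜 Z : Type*} [RCLike 𝕜] [TopologicalSpace Z] [CompactSpace Z]
    [T2Space Z] (φ : C(Z, 𝕜) →ₐ[𝕜] 𝕜) : ∃ z, ∀ g, φ g = g z := by
  obtain ⟨z, hz⟩ := (continuousMapEval_bijective Z 𝕜).2 (equivAlgHom.symm φ)
  exact ⟨z, fun g => (DFunLike.congr_fun hz g).symm⟩

namespace Subalgebra

open ContinuousMap

variable {𝕜 Y : Type*} [RCLike 𝕜] [TopologicalSpace Y] {A : Subalgebra 𝕜 C(Y, 𝕜)}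

theorem norm_apply_le_of_forall_one_le {x : Y} {s : Set Y} [CompactSpace s]
    (hpeak : ∀ f ∈ A, f x = 1 → 1 ≤ ‖f.restrict s‖) {f : C(Y, 𝕜)} (hf : f ∈ A) :
    ‖f x‖ ≤ ‖f.restrict s‖ := by
  rcases eq_or_ne (f x) 0 with hfx | hfx
  · simp [hfx]
  have h := hpeak ((f x)⁻¹ • f) (A.smul_mem hf _) (by simp [hfx])
  rw [← restrictₐ_apply, map_smul, norm_smul, norm_inv, restrictₐ_apply] at h
  rwa [le_inv_mul_iff₀ (norm_pos_iff.2 hfx), mul_one] at h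

theorem eq_top_of_subsingleton [Subsingleton Y] (A : Subalgebra 𝕜 C(Y, 𝕜)) : A = ⊤ := by
  refine eq_top_iff.2 fun f _ => ?_
  obtain hY | ⟨⟨x⟩⟩ := isEmpty_or_nonempty Y
  · exact Subsingleton.elim 0 f ▸ A.zero_mem
  · have hf : f = algebraMap 𝕜 _ (f x) :=
      ContinuousMap.ext fun y => by rw [Subsingleton.elim y x]; rfl
    exact hf ▸ A.algebraMap_mem _

variable [CompactSpace Y]

theorem charFn_mem_of_peak {x : Y} (hx : IsClopen {x}) [CompactSpace ({x}ᶜ : Set Y)]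
    (hA : IsClosed (A : Set C(Y, 𝕜))) {f : C(Y, 𝕜)} (hf : f ∈ A) (hfx : f x = 1)
    (hlt : ‖f.restrict {x}ᶜ‖ < 1) : (LocallyConstant.charFn 𝕜 hx : C(Y, 𝕜)) ∈ A := by
  set χ : C(Y, 𝕜) := ↑(LocallyConstant.charFn 𝕜 hx)
  -- exponents `n + 1`: `‖a ^ n‖ ≤ ‖a‖ ^ n` fails for `n = 0` when `{x}ᶜ` is empty
  have hbound : ∀ n : ℕ, ‖f ^ (n + 1) - χ‖ ≤ ‖f.restrict {x}ᶜ‖ ^ (n + 1) := fun n => by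
    refine (norm_le_max_norm_apply_norm_restrict_compl _ x).trans (max_le ?_ ?_)
    · simp [χ, hfx, LocallyConstant.coe_charFn]
    · rw [← restrictₐ_apply, map_sub, map_pow, restrictₐ_charFn_compl, sub_zero]
      exact norm_pow_le' _ n.succ_pos
  have htend : Tendsto (fun n : ℕ => f ^ (n + 1)) atTop (𝓝 χ) :=
    tendsto_iff_norm_sub_tendsto_zero.2 <| squeeze_zero (fun _ => norm_nonneg _) hbound <|
      (tendsto_pow_atTop_nhds_zero_of_lt_one (norm_nonneg _) hlt).comp (tendsto_add_atTop_nat 1)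
  exact hA.mem_of_tendsto htend (Eventually.of_forall fun n => pow_mem hf _)

theorem eq_top_of_charFn_mem {x : Y} (hx : IsClopen {x}) [CompactSpace ({x}ᶜ : Set Y)]
    (hA : IsClosed (A : Set C(Y, 𝕜)))
    (hdense : Dense ((fun f : C(Y, 𝕜) => f.restrict {x}ᶜ) '' (A : Set C(Y, 𝕜))))
    (hχ : (LocallyConstant.charFn 𝕜 hx : C(Y, 𝕜)) ∈ A) : A = ⊤ := by
  set χ : C(Y, 𝕜) := ↑(LocallyConstant.charFn 𝕜 hx)
  refine eq_top_iff.2 fun g _ =>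
    hA.closure_subset_iff.2 le_rfl <| Metric.mem_closure_iff.2 fun ε hε => ?_
  obtain ⟨_, ⟨h, hh, rfl⟩, hgh⟩ := hdense.exists_dist_lt (g.restrict {x}ᶜ) hε
  refine ⟨h + (g x - h x) • χ, add_mem hh (A.smul_mem hχ _), ?_⟩
  have hrestrict : restrictₐ 𝕜 {x}ᶜ (g - (h + (g x - h x) • χ)) =
      g.restrict {x}ᶜ - h.restrict {x}ᶜ := by
    rw [map_sub, map_add, map_smul, restrictₐ_charFn_compl, smul_zero, add_zero]; rfl
  rw [dist_eq_norm] at hgh ⊢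
  refine (norm_le_max_norm_apply_norm_restrict_compl _ x).trans_lt (max_lt ?_ ?_)
  · simpa [χ, LocallyConstant.coe_charFn] using hε
  · rwa [← restrictₐ_apply, hrestrict]

theorem restrictₐ_comp_val_bijective {s : Set Y} [CompactSpace s]
    (hA : IsClosed (A : Set C(Y, 𝕜)))
    (hnorm : ∀ f ∈ A, ‖f‖ ≤ ‖f.restrict s‖)
    (hdense : Dense ((fun f : C(Y, 𝕜) => f.restrict s) '' (A : Set C(Y, 𝕜)))) :
    Function.Bijective ((restrictₐ 𝕜 s).comp A.val) := by
  have hiso : Isometry ((restrictₐ 𝕜 s).comp A.val) := AddMonoidHomClass.isometry_of_norm _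
    fun f => le_antisymm (norm_restrict_le _ s) (hnorm f f.2)
  have : CompleteSpace A := hA.completeSpace_coe
  have hrange : range ((restrictₐ 𝕜 s).comp A.val) = (fun f : C(Y, 𝕜) => f.restrict s) '' A := by
    ext; simp
  refine ⟨hiso.injective, range_eq_univ.1 ?_⟩
  rw [← hiso.isUniformInducing.isComplete_range.isClosed.closure_eq, hrange, hdense.closure_eq]

theorem exists_mem_forall_apply_eq [T2Space Y] {s : Set Y} [CompactSpace s]
    (hA : IsClosed (A : Set C(Y, 𝕜)))
    (hnorm : ∀ f ∈ A, ‖f‖ ≤ ‖f.restrict s‖)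
    (hdense : Dense ((fun f : C(Y, 𝕜) => f.restrict s) '' (A : Set C(Y, 𝕜)))) (x : Y) :
    ∃ z ∈ s, ∀ f ∈ A, f x = f z := by
  let e := AlgEquiv.ofBijective _ (restrictₐ_comp_val_bijective hA hnorm hdense)
  obtain ⟨z, hz⟩ := ((evalAlgHom 𝕜 𝕜 x).comp (A.val.comp e.symm.toAlgHom)).exists_eq_eval
  refine ⟨z, z.2, fun f hf => ?_⟩
  calc f x = (e.symm (e ⟨f, hf⟩) : C(Y, 𝕜)) x := by rw [e.symm_apply_apply]
    _ = e ⟨f, hf⟩ z := hz _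
    _ = f z := rfl

end Subalgebra

theorem stmt_7 (A : Subalgebra ℂ C(X, ℂ))
    (hclosed : IsClosed (A : Set C(X, ℂ)))
    (hsep : ∀ x y : X, x ≠ y → ∃ f ∈ A, f x ≠ f y)
    (hperv : Pervasive A) (hproper : A ≠ ⊤) :
    ∀ x : X, ¬ IsOpen ({x} : Set X) := by
  intro x hx
  rcases subsingleton_or_nontrivial X with hX | hX
  · exact hproper A.eq_top_of_subsingleton
  have hxc : IsClopen {x} := ⟨isClosed_singleton, hx⟩
  have : CompactSpace ({x}ᶜ : Set X) := isCompact_iff_compactSpace.1 hx.isClosed_compl.isCompact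
  have hdense := hperv _ hx.isClosed_compl (exists_ne x) (compl_ne_univ.2 (singleton_nonempty x))
  by_cases hpeak : ∃ f ∈ A, f x = 1 ∧ ‖f.restrict {x}ᶜ‖ < 1
  · obtain ⟨f, hf, hfx, hlt⟩ := hpeak
    exact hproper (Subalgebra.eq_top_of_charFn_mem hxc hclosed hdense
      (Subalgebra.charFn_mem_of_peak hxc hclosed hf hfx hlt))
  push Not at hpeak
  have hnorm : ∀ f ∈ A, ‖f‖ ≤ ‖f.restrict {x}ᶜ‖ := fun f hf =>
    (ContinuousMap.norm_le_max_norm_apply_norm_restrict_compl f x).trans <|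
      max_le (Subalgebra.norm_apply_le_of_forall_one_le hpeak hf) le_rfl
  obtain ⟨z, hzx, hz⟩ := Subalgebra.exists_mem_forall_apply_eq hclosed hnorm hdense x
  obtain ⟨f, hf, hfz⟩ := hsep x z (Ne.symm hzx)
  exact hfz (hz f hf)
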